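/- Let P(S,Y,T) be an ε-IP Blackwell optimal information structure with P(S=s,T=t)>0 for all s∈𝒮, t∈𝒯. For t∈T̃ define A_t = {s∈𝒮 : P(Y=1|S=s,T=t)=1}, B_t = {s∈A_t : P(T=t|S=s)=H_t} and C_t = {s∈𝒮∖A_t : P(T=t|S=s)=H_t}. Then for all t₁,t₂∈T̃ with A_{t₁} strictly contained in A_{t₂}, one has B_{t₁} ⊆ B_{t₂} and C_{t₂} ⊆ C_{t₁}. -/

import Mathlib

open Real
open scoped Classical

noncomputable section

namespace IPPaper

variable {S T : Type} [Fintype S] [Fintype T]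

/-- Marginal probability of the secret `S`. -/
def pS (P : S → Bool → T → ℝ) (s : S) : ℝ := ∑ y, ∑ t, P s y t

/-- Marginal probability of the signal `T`. -/
def pT (P : S → Bool → T → ℝ) (t : T) : ℝ := ∑ s, ∑ y, P s y t

/-- Joint marginal on `(S,T)`. -/
def pST (P : S → Bool → T → ℝ) (s : S) (t : T) : ℝ := ∑ y, P s y t

/-- Joint marginal on `(Y,T)`. -/
def pYT (P : S → Bool → T → ℝ) (y : Bool) (t : T) : ℝ := ∑ s, P s y t

/-- Joint marginal on `(S,Y)`. -/
def pSY (P : S → Bool → T → ℝ) (s : S) (y : Bool) : ℝ := ∑ t, P s y t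

/-- An information structure: nonnegative, sums to one, every secret has positive
probability. -/
def InfoStructure (P : S → Bool → T → ℝ) : Prop :=
  (∀ s y t, 0 ≤ P s y t) ∧ (∑ s, ∑ y, ∑ t, P s y t) = 1 ∧ ∀ s, 0 < pS P s

/-- Conditional probability `P(T = t | S = s)`. -/
def condTS (P : S → Bool → T → ℝ) (t : T) (s : S) : ℝ := pST P s t / pS P s

/-- Conditional probability `P(S = s | T = t)`. -/
def condST (P : S → Bool → T → ℝ) (s : S) (t : T) : ℝ := pST P s t / pT P t

/-- Posterior `P(Y = 1 | T = t)`. -/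
def postYT (P : S → Bool → T → ℝ) (t : T) : ℝ := pYT P true t / pT P t

/-- Posterior `P(Y = 1 | S = s, T = t)`. -/
def postYST (P : S → Bool → T → ℝ) (s : S) (t : T) : ℝ := P s true t / pST P s t

/-- Prior conditional `P(Y = 1 | S = s)`. -/
def qS (P : S → Bool → T → ℝ) (s : S) : ℝ := pSY P s true / pS P s

/-- `ε`-inferential privacy. -/
def IsIP (ε : ℝ) (P : S → Bool → T → ℝ) : Prop :=
  ∀ s₁ s₂ t, condTS P t s₁ ≤ Real.exp ε * condTS P t s₂

/-- Blackwell dominance via a row-stochastic garbling kernel. -/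
def BlackwellDom {T₁ T₂ : Type} [Fintype T₁] [Fintype T₂]
    (Q₁ : Bool → T₁ → ℝ) (Q₂ : Bool → T₂ → ℝ) : Prop :=
  ∃ G : T₁ → T₂ → ℝ, (∀ a b, 0 ≤ G a b) ∧ (∀ a, ∑ b, G a b = 1) ∧
    ∀ y b, Q₂ y b = ∑ a, Q₁ y a * G a b

/-- `ε`-IP Blackwell optimality: no ε-IP information structure with the same
marginal on `(S,Y)` (over any finite signal set) strictly Blackwell dominates it. -/
def BlackwellOptimal (ε : ℝ) (P : S → Bool → T → ℝ) : Prop :=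
  InfoStructure P ∧ IsIP ε P ∧
  ¬ ∃ (n : ℕ) (P' : S → Bool → Fin n → ℝ),
      InfoStructure P' ∧ IsIP ε P' ∧ (∀ s y, pSY P' s y = pSY P s y) ∧
      BlackwellDom (pYT P') (pYT P) ∧ ¬ BlackwellDom (pYT P) (pYT P')

/-- Membership in `T̃`: signals with positive probability and nondegenerate posterior. -/
def inTildeT (P : S → Bool → T → ℝ) (t : T) : Prop :=
  0 < pT P t ∧ postYT P t ≠ 0 ∧ postYT P t ≠ 1

/-- `L_t = min_s P(T=t|S=s)`. -/
def Lval [Nonempty S] (P : S → Bool → T → ℝ) (t : T) : ℝ :=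
  Finset.univ.inf' Finset.univ_nonempty (fun s => condTS P t s)

/-- `H_t = max_s P(T=t|S=s)`. -/
def Hval [Nonempty S] (P : S → Bool → T → ℝ) (t : T) : ℝ :=
  Finset.univ.sup' Finset.univ_nonempty (fun s => condTS P t s)

/-- Expected utility `Σ_{t : P(T=t)>0} P(T=t)·u(P(Y=1|T=t))`. -/
def EU (P : S → Bool → T → ℝ) (u : ℝ → ℝ) : ℝ :=
  ∑ t ∈ Finset.univ.filter (fun t => 0 < pT P t), pT P t * u (postYT P t)

end IPPaper

/-!
The potential `Φ(Q) = Σ_t P(T=t) · P(Y=1|T=t)²` is the second moment of the posterior; by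
convexity of the perspective `(a, b) ↦ a² / (a + b)` it can only decrease under garbling. A
perturbation that keeps the `(S,Y)` marginal and ε-IP, and spreads the posteriors of two signals
apart, is a strict Blackwell improvement: the old signals are mixtures of the new ones, and `Φ`
increases strictly. Optimality rules out three such perturbations. Swapping `Y = 1` mass against
`Y = 0` mass of a secret in `A_{t₂} \ A_{t₁}` leaves `P(T|S)` unchanged and shows
`P(Y=1|t₁) < P(Y=1|t₂)`. Given this, if `s ∈ B_{t₁}` were not maximal at `t₂`, a little of its
`Y = 1` mass could move from `t₁` to `t₂` without breaking ε-IP (when `ε > 0`, the row maximum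
`H_{t₁}` has room below `e^ε H_{t₁}`); symmetrically for `C_{t₂}` with `Y = 0` mass moving from `t₂`
to `t₁`. For `ε ≤ 0`, ε-IP forces `P(T=t|S=s) = H_t` for every `s`.
-/


namespace IPPaper

open Finset Filter Topology

section Potential

/-- For `w y = P(Y=y, T=t)` this is `P(T=t) · P(Y=1|T=t)²`. -/
def phi (w : Bool → ℝ) : ℝ := w true ^ 2 / (w true + w false)

lemma phi_smul {c : ℝ} (hc : 0 ≤ c) (w : Bool → ℝ) : phi (c • w) = c * phi w := by
  simp only [phi, Pi.smul_apply, smul_eq_mul]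
  rcases hc.eq_or_lt with rfl | hc
  · simp
  rw [← mul_add, mul_pow, mul_div_mul_comm, sq, mul_div_cancel_right₀ _ hc.ne']

lemma phi_add_le {u v : Bool → ℝ} (hu : 0 ≤ u) (hv : 0 ≤ v) :
    phi (u + v) ≤ phi u + phi v := by
  simp only [phi, Pi.add_apply]
  have hu₁ := hu true; have hu₀ := hu false; have hv₁ := hv true; have hv₀ := hv false
  simp only [Pi.zero_apply] at hu₁ hu₀ hv₁ hv₀
  rcases (add_nonneg hu₁ hu₀).eq_or_lt with hu' | hu'
  · obtain ⟨h₁, h₀⟩ : u true = 0 ∧ u false = 0 := ⟨by linarith, by linarith⟩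
    simp [h₁, h₀]
  rcases (add_nonneg hv₁ hv₀).eq_or_lt with hv' | hv'
  · obtain ⟨h₁, h₀⟩ : v true = 0 ∧ v false = 0 := ⟨by linarith, by linarith⟩
    simp [h₁, h₀]
  rw [div_add_div _ _ hu'.ne' hv'.ne', div_le_div_iff₀ (by linarith) (by positivity)]
  nlinarith [sq_nonneg (u true * v false - v true * u false)]

lemma phi_add_lt {u v : Bool → ℝ} (hu : 0 < u true + u false) (hv : 0 < v true + v false)
    (huv : u true * v false ≠ v true * u false) :
    phi (u + v) < phi u + phi v := by
  simp only [phi, Pi.add_apply]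
  rw [div_add_div _ _ hu.ne' hv.ne', div_lt_div_iff₀ (by linarith) (by positivity)]
  nlinarith [sq_pos_of_ne_zero (sub_ne_zero.mpr huv)]

def potential {T : Type} [Fintype T] (Q : Bool → T → ℝ) : ℝ := ∑ t, phi (Q · t)

lemma potential_le_of_blackwellDom {T₁ T₂ : Type} [Fintype T₁] [Fintype T₂]
    {Q₁ : Bool → T₁ → ℝ} {Q₂ : Bool → T₂ → ℝ} (hQ₁ : ∀ y t, 0 ≤ Q₁ y t)
    (hd : BlackwellDom Q₁ Q₂) : potential Q₂ ≤ potential Q₁ := by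
  obtain ⟨G, hG₀, hG₁, hQ₂⟩ := hd
  have hcol : ∀ b, (Q₂ · b) = ∑ a, G a b • (Q₁ · a) := fun b => by
    ext y; simp [hQ₂ y b, Finset.sum_apply, mul_comm]
  calc potential Q₂ = ∑ b, phi (∑ a, G a b • (Q₁ · a)) := by simp only [potential, hcol]
    _ ≤ ∑ b, ∑ a, phi (G a b • (Q₁ · a)) := by
        refine sum_le_sum fun b _ => le_sum_of_subadditive_on_pred phi (0 ≤ ·) (by simp [phi])
          (fun u v hu hv => phi_add_le hu hv) (fun u v hu hv => add_nonneg hu hv) _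
          fun a _ => smul_nonneg (hG₀ a b) fun y => hQ₁ y a
    _ = ∑ a, (∑ b, G a b) * phi (Q₁ · a) := by
        rw [sum_comm]; simp only [phi_smul (hG₀ _ _), sum_mul]
    _ = potential Q₁ := by simp [potential, hG₁]

end Potential

section Mixing

variable {T : Type} [Fintype T]

lemma blackwellDom_of_mix {Q Q' : Bool → T → ℝ} {t₁ t₂ : T} (h12 : t₁ ≠ t₂) {g₁ g₂ : ℝ}
    (hg₁ : g₁ ∈ Set.Icc (0 : ℝ) 1) (hg₂ : g₂ ∈ Set.Icc (0 : ℝ) 1)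
    (hoff : ∀ t, t ≠ t₁ → t ≠ t₂ → (Q' · t) = (Q · t))
    (hmix₁ : (Q · t₁) = g₁ • (Q' · t₁) + g₂ • (Q' · t₂))
    (hmix₂ : (Q · t₂) = (1 - g₁) • (Q' · t₁) + (1 - g₂) • (Q' · t₂)) :
    BlackwellDom Q' Q := by
  let G : T → T → ℝ := fun a b =>
    if b = t₁ then (if a = t₁ then g₁ else if a = t₂ then g₂ else 0)
    else if b = t₂ then (if a = t₁ then 1 - g₁ else if a = t₂ then 1 - g₂ else 0)
    else if a = b then 1 else 0
  refine ⟨G, fun a b => ?_, fun a => ?_, fun y b => ?_⟩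
  · simp only [G]; split_ifs <;> linarith [hg₁.1, hg₁.2, hg₂.1, hg₂.2]
  · by_cases ha₁ : a = t₁
    · subst ha₁
      rw [Fintype.sum_eq_add _ _ h12 fun b hb => by simp [G, hb.1, hb.2, Ne.symm hb.1]]
      simp [G, h12.symm]
    by_cases ha₂ : a = t₂
    · subst ha₂
      rw [Fintype.sum_eq_add _ _ h12 fun b hb => by simp [G, hb.1, hb.2, Ne.symm hb.2]]
      simp [G, h12.symm]
    rw [Fintype.sum_eq_single a fun b hb => by simp [G, ha₁, ha₂, Ne.symm hb]]
    simp [G, ha₁, ha₂]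
  · by_cases hb₁ : b = t₁
    · subst hb₁
      rw [Fintype.sum_eq_add _ _ h12 fun a ha => by simp [G, ha.1, ha.2], congrFun hmix₁ y]
      simp [G, h12.symm, mul_comm]
    by_cases hb₂ : b = t₂
    · subst hb₂
      rw [Fintype.sum_eq_add _ _ h12 fun a ha => by simp [G, ha.1, ha.2, h12.symm],
        congrFun hmix₂ y]
      simp [G, h12.symm, mul_comm]
    rw [Fintype.sum_eq_single b fun a ha => by simp [G, hb₁, hb₂, ha],
      ← congrFun (hoff b hb₁ hb₂) y]
    simp [G, hb₁, hb₂]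

lemma potential_lt_of_mix {Q Q' : Bool → T → ℝ} {t₁ t₂ : T} (h12 : t₁ ≠ t₂) {g₁ g₂ : ℝ}
    (hQ' : ∀ y t, 0 ≤ Q' y t) (hg₁ : g₁ ∈ Set.Ioc (0 : ℝ) 1) (hg₂ : g₂ ∈ Set.Ioc (0 : ℝ) 1)
    (hdet : Q' true t₁ * Q' false t₂ ≠ Q' true t₂ * Q' false t₁)
    (hoff : ∀ t, t ≠ t₁ → t ≠ t₂ → (Q' · t) = (Q · t))
    (hmix₁ : (Q · t₁) = g₁ • (Q' · t₁) + g₂ • (Q' · t₂))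
    (hmix₂ : (Q · t₂) = (1 - g₁) • (Q' · t₁) + (1 - g₂) • (Q' · t₂)) :
    potential Q < potential Q' := by
  have hcol : ∀ t, 0 ≤ (Q' · t) := fun t y => hQ' y t
  have hmass : ∀ t, t = t₁ ∨ t = t₂ → 0 < Q' true t + Q' false t := by
    rintro t ht
    refine (add_nonneg (hQ' true t) (hQ' false t)).lt_of_ne fun h => hdet ?_
    obtain ⟨h₁, h₀⟩ : Q' true t = 0 ∧ Q' false t = 0 :=
      ⟨by linarith [hQ' true t, hQ' false t], by linarith [hQ' true t, hQ' false t]⟩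
    rcases ht with rfl | rfl <;> simp [h₁, h₀]
  have hlt₁ : phi (Q · t₁) < g₁ * phi (Q' · t₁) + g₂ * phi (Q' · t₂) := by
    rw [hmix₁, ← phi_smul hg₁.1.le, ← phi_smul hg₂.1.le]
    refine phi_add_lt ?_ ?_ ?_ <;> simp only [Pi.smul_apply, smul_eq_mul]
    · nlinarith [hmass t₁ (Or.inl rfl), hg₁.1]
    · nlinarith [hmass t₂ (Or.inr rfl), hg₂.1]
    · intro h
      exact hdet (mul_left_cancel₀ (mul_pos hg₁.1 hg₂.1).ne' (by linear_combination h))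
  have hle₂ : phi (Q · t₂) ≤ (1 - g₁) * phi (Q' · t₁) + (1 - g₂) * phi (Q' · t₂) := by
    rw [hmix₂, ← phi_smul (sub_nonneg.mpr hg₁.2), ← phi_smul (sub_nonneg.mpr hg₂.2)]
    exact phi_add_le (smul_nonneg (sub_nonneg.mpr hg₁.2) (hcol t₁))
      (smul_nonneg (sub_nonneg.mpr hg₂.2) (hcol t₂))
  have hdiff : potential Q' - potential Q =
      phi (Q' · t₁) - phi (Q · t₁) + (phi (Q' · t₂) - phi (Q · t₂)) := by
    rw [potential, potential, ← sum_sub_distrib,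
      Fintype.sum_eq_add _ _ h12 fun t ht => by rw [hoff t ht.1 ht.2, sub_self]]
  linarith

/-- `u true * w false < w true * u false` is `P(Y=1|u) < P(Y=1|w)` cross-multiplied; the weights
come from Cramer's rule. -/
lemma exists_mix_of_posterior_between {u v w₁ w₂ : Bool → ℝ} (hsum : w₁ + w₂ = u + v)
    (h₁ : u true * w₁ false < w₁ true * u false) (h₂ : w₁ true * v false < v true * w₁ false)
    (h₃ : u true * w₂ false ≤ w₂ true * u false) (h₄ : w₂ true * v false ≤ v true * w₂ false) :
    u true * v false < v true * u false ∧ ∃ g₁ ∈ Set.Ioc (0 : ℝ) 1, ∃ g₂ ∈ Set.Ioc (0 : ℝ) 1,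
      w₁ = g₁ • u + g₂ • v ∧ w₂ = (1 - g₁) • u + (1 - g₂) • v := by
  have hs : ∀ y, w₂ y = u y + v y - w₁ y := fun y => by
    have := congrFun hsum y; simp only [Pi.add_apply] at this; linarith
  set d := u true * v false - v true * u false with hd_def
  have hd : d < 0 := by simp only [hs] at h₃; nlinarith
  set g₁ := (w₁ true * v false - v true * w₁ false) / d
  set g₂ := (u true * w₁ false - w₁ true * u false) / d
  have hw₁ : w₁ = g₁ • u + g₂ • v := by
    ext y
    have hd0 := hd.ne
    simp only [Pi.add_apply, Pi.smul_apply, smul_eq_mul, g₁, g₂]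
    field_simp
    cases y <;> rw [hd_def] <;> ring
  refine ⟨by linarith, g₁, ⟨div_pos_of_neg_of_neg (by linarith) hd, ?_⟩,
    g₂, ⟨div_pos_of_neg_of_neg (by linarith) hd, ?_⟩, hw₁, ?_⟩
  · rw [div_le_one_of_neg hd]; simp only [hs] at h₄; linarith
  · rw [div_le_one_of_neg hd]; simp only [hs] at h₃; linarith
  · ext y; have := congrFun hsum y; rw [hw₁] at this
    simp only [Pi.add_apply, Pi.smul_apply, smul_eq_mul] at this ⊢; linarith

lemma blackwellDom_and_potential_lt_of_spread {Q Q' : Bool → T → ℝ} {t₁ t₂ : T}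
    (h12 : t₁ ≠ t₂) (hQ' : ∀ y t, 0 ≤ Q' y t)
    (hoff : ∀ t, t ≠ t₁ → t ≠ t₂ → (Q' · t) = (Q · t))
    (hcons : (Q' · t₁) + (Q' · t₂) = (Q · t₁) + (Q · t₂))
    (h₁ : Q' true t₁ * Q false t₁ < Q true t₁ * Q' false t₁)
    (h₂ : Q true t₁ * Q' false t₂ < Q' true t₂ * Q false t₁)
    (h₃ : Q' true t₁ * Q false t₂ ≤ Q true t₂ * Q' false t₁)
    (h₄ : Q true t₂ * Q' false t₂ ≤ Q' true t₂ * Q false t₂) :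
    BlackwellDom Q' Q ∧ potential Q < potential Q' := by
  obtain ⟨hdet, g₁, hg₁, g₂, hg₂, hmix₁, hmix₂⟩ :=
    exists_mix_of_posterior_between (u := (Q' · t₁)) (v := (Q' · t₂)) hcons.symm h₁ h₂ h₃ h₄
  exact ⟨blackwellDom_of_mix h12 (Set.Ioc_subset_Icc_self hg₁) (Set.Ioc_subset_Icc_self hg₂)
      hoff hmix₁ hmix₂,
    potential_lt_of_mix h12 hQ' hg₁ hg₂ hdet.ne hoff hmix₁ hmix₂⟩

end Mixing

section Structures

variable {S T T' : Type}

lemma pS_eq_of_pSY_eq [Fintype T] [Fintype T'] {P : S → Bool → T → ℝ} {P' : S → Bool → T' → ℝ}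
    (h : ∀ s y, pSY P' s y = pSY P s y) (s : S) : pS P' s = pS P s :=
  sum_congr rfl fun y _ => h s y

lemma InfoStructure.of_pSY_eq [Fintype S] [Fintype T] [Fintype T'] {P : S → Bool → T → ℝ}
    {P' : S → Bool → T' → ℝ}
    (hP : InfoStructure P) (h0 : ∀ s y t, 0 ≤ P' s y t) (h : ∀ s y, pSY P' s y = pSY P s y) :
    InfoStructure P' :=
  ⟨h0, (sum_congr rfl fun s _ => sum_congr rfl fun y _ => h s y).trans hP.2.1,
    fun s => pS_eq_of_pSY_eq h s ▸ hP.2.2 s⟩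

lemma pYT_nonneg [Fintype S] {P : S → Bool → T → ℝ} (h0 : ∀ s y t, 0 ≤ P s y t) (y : Bool) (t : T) :
    0 ≤ pYT P y t :=
  sum_nonneg fun s _ => h0 s y t

lemma le_pYT [Fintype S] {P : S → Bool → T → ℝ} (h0 : ∀ s y t, 0 ≤ P s y t) (s : S) (y : Bool)
    (t : T) : P s y t ≤ pYT P y t :=
  single_le_sum (fun s' _ => h0 s' y t) (mem_univ s)

lemma condTS_nonneg [Fintype S] [Fintype T] {P : S → Bool → T → ℝ} (hP : InfoStructure P)
    (t : T) (s : S) : 0 ≤ condTS P t s :=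
  div_nonneg (sum_nonneg fun y _ => hP.1 s y t) (hP.2.2 s).le

lemma pST_eq_add (P : S → Bool → T → ℝ) (s : S) (t : T) :
    pST P s t = P s true t + P s false t := by
  simp [pST, add_comm]

lemma pT_eq_add [Fintype S] (P : S → Bool → T → ℝ) (t : T) :
    pT P t = pYT P true t + pYT P false t := by
  simp [pT, pYT, sum_add_distrib, add_comm]

lemma postYST_eq_one_iff {P : S → Bool → T → ℝ} {s : S} {t : T} (hst : 0 < pST P s t) :
    postYST P s t = 1 ↔ P s false t = 0 := by
  rw [postYST, div_eq_one_iff_eq hst.ne', pST_eq_add]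
  constructor <;> intro h <;> linarith

lemma pos_true_of_postYST_eq_one {P : S → Bool → T → ℝ} {s : S} {t : T}
    (hst : 0 < pST P s t) (h : postYST P s t = 1) : 0 < P s true t := by
  linarith [pST_eq_add P s t, (postYST_eq_one_iff hst).mp h]

lemma pos_false_of_postYST_ne_one {P : S → Bool → T → ℝ} (h0 : ∀ s y t, 0 ≤ P s y t) {s : S}
    {t : T} (hst : 0 < pST P s t) (h : postYST P s t ≠ 1) : 0 < P s false t :=
  (h0 s false t).lt_of_ne fun h' => h ((postYST_eq_one_iff hst).mpr h'.symm)

lemma inTildeT.pYT_pos [Fintype S] {P : S → Bool → T → ℝ} {t : T} (ht : inTildeT P t)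
    (h0 : ∀ s y t, 0 ≤ P s y t) (y : Bool) : 0 < pYT P y t := by
  obtain ⟨hT, h₀, h₁⟩ := ht
  refine (pYT_nonneg h0 y t).lt_of_ne fun hy => ?_
  rw [pT_eq_add] at hT
  cases y
  · rw [← hy, add_zero] at hT
    exact h₁ (by rw [postYT, pT_eq_add, ← hy, add_zero, div_self hT.ne'])
  · exact h₀ (by rw [postYT, ← hy, zero_div])

/-- Any finite signal type may be used here: it is relabelled by `Fin n`. -/
lemma BlackwellOptimal.potential_le [Fintype S] [Fintype T] [Fintype T'] {ε : ℝ}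
    {P : S → Bool → T → ℝ} (hopt : BlackwellOptimal ε P)
    {P' : S → Bool → T' → ℝ} (hP' : InfoStructure P') (hIP' : IsIP ε P')
    (hSY : ∀ s y, pSY P' s y = pSY P s y) (hdom : BlackwellDom (pYT P') (pYT P)) :
    potential (pYT P') ≤ potential (pYT P) := by
  by_contra! hlt
  obtain ⟨hP, -, hno⟩ := hopt
  let e := (Fintype.equivFin T').symm
  let P'' : S → Bool → Fin (Fintype.card T') → ℝ := fun s y i => P' s y (e i)
  have hSY'' : ∀ s y, pSY P'' s y = pSY P s y := fun s y => (e.sum_comp (P' s y)).trans (hSY s y)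
  have hpS'' : ∀ s, pS P'' s = pS P' s := pS_eq_of_pSY_eq fun s y => e.sum_comp (P' s y)
  refine hno ⟨_, P'', hP.of_pSY_eq (fun s y i => hP'.1 s y (e i)) hSY'', fun s₁ s₂ i => ?_,
    hSY'', ?_, fun hd => ?_⟩
  · rw [condTS, condTS, hpS'', hpS'']; exact hIP' s₁ s₂ (e i)
  · obtain ⟨G, hG₀, hG₁, hG⟩ := hdom
    exact ⟨fun i => G (e i), fun i => hG₀ (e i), fun i => hG₁ (e i),
      fun y b => (hG y b).trans (e.sum_comp fun a => pYT P' y a * G a b).symm⟩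
  · have hpot : potential (pYT P'') = potential (pYT P') := e.sum_comp fun t => phi (pYT P' · t)
    linarith [potential_le_of_blackwellDom (pYT_nonneg hP.1) hd]

end Structures

section Transfer

variable {S T : Type}

def transfer (P : S → Bool → T → ℝ) (s₀ : S) (y₀ : Bool) (src dst : T) (x : ℝ) :
    S → Bool → T → ℝ :=
  fun s y t =>
    P s y t + if s = s₀ ∧ y = y₀ then (Pi.single dst x - Pi.single src x : T → ℝ) t else 0

variable (P : S → Bool → T → ℝ) (s₀ : S) (y₀ : Bool) (src dst : T) (x : ℝ)

lemma pSY_transfer [Fintype T] (s : S) (y : Bool) :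
    pSY (transfer P s₀ y₀ src dst x) s y = pSY P s y := by
  simp [pSY, transfer, sum_add_distrib]

lemma pST_transfer (s : S) (t : T) : pST (transfer P s₀ y₀ src dst x) s t =
    pST P s t + if s = s₀ then (Pi.single dst x - Pi.single src x : T → ℝ) t else 0 := by
  by_cases hs : s = s₀ <;> cases y₀ <;> simp [pST, transfer, sum_add_distrib, hs]

lemma pYT_transfer [Fintype S] (y : Bool) (t : T) : pYT (transfer P s₀ y₀ src dst x) y t =
    pYT P y t + if y = y₀ then (Pi.single dst x - Pi.single src x : T → ℝ) t else 0 := by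
  by_cases hy : y = y₀ <;> simp [pYT, transfer, sum_add_distrib, hy]

lemma condTS_transfer [Fintype T] (t : T) : condTS (transfer P s₀ y₀ src dst x) t =
    Function.update (condTS P t) s₀
      (condTS P t s₀ + (Pi.single dst x - Pi.single src x : T → ℝ) t / pS P s₀) := by
  ext s
  rw [condTS, pST_transfer, pS_eq_of_pSY_eq (pSY_transfer P s₀ y₀ src dst x)]
  rcases eq_or_ne s s₀ with rfl | hs
  · simp [condTS, add_div]
  · simp [condTS, hs]

variable {P s₀ y₀ src dst x}

lemma pYT_transfer_of_ne [Fintype S] {t : T} (hsrc : t ≠ src) (hdst : t ≠ dst) :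
    (pYT (transfer P s₀ y₀ src dst x) · t) = (pYT P · t) := by
  ext y
  simp [pYT_transfer, Pi.single_eq_of_ne hsrc, Pi.single_eq_of_ne hdst]

lemma pYT_transfer_add [Fintype S] :
    (pYT (transfer P s₀ y₀ src dst x) · src) + (pYT (transfer P s₀ y₀ src dst x) · dst) =
      (pYT P · src) + (pYT P · dst) := by
  ext y
  simp only [Pi.add_apply, pYT_transfer, Pi.sub_apply, Pi.single_eq_same, Pi.single_comm src x dst]
  split_ifs <;> ring

lemma transfer_nonneg (h0 : ∀ s y t, 0 ≤ P s y t) (hne : src ≠ dst) (hx : 0 ≤ x)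
    (hxle : x ≤ P s₀ y₀ src) (s : S) (y : Bool) (t : T) :
    0 ≤ transfer P s₀ y₀ src dst x s y t := by
  by_cases h : s = s₀ ∧ y = y₀
  · obtain ⟨rfl, rfl⟩ := h
    rcases eq_or_ne t src with rfl | ht
    · simpa [transfer, hne] using hxle
    · simp only [transfer, and_self, if_true, Pi.sub_apply, Pi.single_eq_of_ne ht, sub_zero]
      exact add_nonneg (h0 s y t) (Pi.single_nonneg (α := fun _ : T => ℝ) |>.2 hx t)
  · simpa [transfer, h] using h0 s y t

end Transfer

section Privacy

lemma update_le_exp_mul_update_of_le_sup' {S : Type} [Fintype S] [Nonempty S] {ε : ℝ} {c : S → ℝ}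
    (hε : 0 ≤ ε) (hc : ∀ s₁ s₂, c s₁ ≤ exp ε * c s₂) {s₀ : S} {v : ℝ} (hc₀ : 0 ≤ c s₀)
    (hlo : c s₀ ≤ v) (hhi : v ≤ univ.sup' univ_nonempty c) (s₁ s₂ : S) :
    Function.update c s₀ v s₁ ≤ exp ε * Function.update c s₀ v s₂ := by
  have hsup : ∀ s, univ.sup' univ_nonempty c ≤ exp ε * c s := fun s =>
    sup'_le _ _ fun s' _ => hc s' s
  simp only [Function.update_apply]
  split_ifs
  · exact le_mul_of_one_le_left (hc₀.trans hlo) (one_le_exp hε)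
  · exact hhi.trans (hsup s₂)
  · exact (hc s₁ s₀).trans (mul_le_mul_of_nonneg_left hlo (exp_pos ε).le)
  · exact hc s₁ s₂

lemma update_le_exp_mul_update_of_sup'_le {S : Type} [Fintype S] [Nonempty S] {ε : ℝ} {c : S → ℝ}
    (hε : 0 ≤ ε) (hc : ∀ s₁ s₂, c s₁ ≤ exp ε * c s₂) {s₀ : S} {v : ℝ} (hv : 0 ≤ v)
    (hhi : v ≤ c s₀) (hlo : univ.sup' univ_nonempty c ≤ exp ε * v) (s₁ s₂ : S) :
    Function.update c s₀ v s₁ ≤ exp ε * Function.update c s₀ v s₂ := by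
  have hsup : ∀ s, c s ≤ univ.sup' univ_nonempty c := fun s => le_sup' c (mem_univ s)
  simp only [Function.update_apply]
  split_ifs
  · exact le_mul_of_one_le_left hv (one_le_exp hε)
  · exact hhi.trans (hc s₀ s₂)
  · exact (hsup s₁).trans hlo
  · exact hc s₁ s₂

variable {S T : Type} [Fintype S] [Fintype T] [Nonempty S] {ε : ℝ} {P : S → Bool → T → ℝ}

lemma condTS_le_Hval (t : T) (s : S) : condTS P t s ≤ Hval P t :=
  le_sup' (condTS P t) (mem_univ s)

lemma isIP_transfer (hε : 0 ≤ ε) (hP : InfoStructure P) (hIP : IsIP ε P) {s₀ : S} {y₀ : Bool}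
    {src dst : T} {x : ℝ} (hne : src ≠ dst) (hx : 0 ≤ x)
    (hdst : condTS P dst s₀ + x / pS P s₀ ≤ Hval P dst)
    (hsrc : Hval P src ≤ exp ε * (condTS P src s₀ - x / pS P s₀)) :
    IsIP ε (transfer P s₀ y₀ src dst x) := by
  have hx' : 0 ≤ x / pS P s₀ := div_nonneg hx (hP.2.2 s₀).le
  intro s₁ s₂ t
  rw [condTS_transfer]
  rcases eq_or_ne t dst with rfl | hdt
  · simp only [Pi.sub_apply, Pi.single_eq_same, Pi.single_eq_of_ne hne.symm, sub_zero]
    exact update_le_exp_mul_update_of_le_sup' hε (fun s₁ s₂ => hIP s₁ s₂ t) (condTS_nonneg hP t s₀)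
      (le_add_of_nonneg_right hx') hdst s₁ s₂
  rcases eq_or_ne t src with rfl | hst
  · have hv : 0 ≤ condTS P t s₀ - x / pS P s₀ := nonneg_of_mul_nonneg_right
      (((condTS_nonneg hP t s₀).trans (condTS_le_Hval t s₀)).trans hsrc) (exp_pos ε)
    simp only [Pi.sub_apply, Pi.single_eq_same, Pi.single_eq_of_ne hne, zero_sub, ← sub_eq_add_neg,
      neg_div]
    exact update_le_exp_mul_update_of_sup'_le hε (fun s₁ s₂ => hIP s₁ s₂ t) hv (sub_le_self _ hx')
      hsrc s₁ s₂
  · simpa [Pi.single_eq_of_ne hdt, Pi.single_eq_of_ne hst] using hIP s₁ s₂ t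

lemma exists_isIP_transfer (hε : 0 < ε) (hP : InfoStructure P) (hIP : IsIP ε P) {s₀ : S}
    {y₀ : Bool} {src dst : T} (hne : src ≠ dst) (hmass : 0 < P s₀ y₀ src)
    (hsrc : condTS P src s₀ = Hval P src) (hdst : condTS P dst s₀ < Hval P dst) :
    ∃ x, 0 < x ∧ x ≤ P s₀ y₀ src ∧ IsIP ε (transfer P s₀ y₀ src dst x) := by
  have hHsrc : 0 < Hval P src := by
    rw [← hsrc]
    refine div_pos (hmass.trans_le ?_) (hP.2.2 s₀)
    exact single_le_sum (fun y _ => hP.1 s₀ y src) (mem_univ y₀)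
  have hev : ∀ᶠ x in 𝓝 (0 : ℝ), x < P s₀ y₀ src ∧
      condTS P dst s₀ + x / pS P s₀ < Hval P dst ∧
      Hval P src < exp ε * (condTS P src s₀ - x / pS P s₀) := by
    refine (ContinuousAt.eventually_lt (by fun_prop) (by fun_prop) (by simpa using hmass)).and
      ((ContinuousAt.eventually_lt (by fun_prop) (by fun_prop) (by simpa using hdst)).and
      (ContinuousAt.eventually_lt (by fun_prop) (by fun_prop) ?_))
    -- at `x = 0` all three constraints hold strictly; for the last one this needs `ε > 0`
    simpa [hsrc] using lt_mul_of_one_lt_left hHsrc (one_lt_exp_iff.mpr hε)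
  obtain ⟨x, ⟨hx₁, hx₂, hx₃⟩, hx⟩ :=
    ((hev.filter_mono nhdsWithin_le_nhds).and (self_mem_nhdsWithin (s := Set.Ioi 0))).exists
  exact ⟨x, hx, hx₁.le, isIP_transfer hε.le hP hIP hne hx.le hx₂.le hx₃.le⟩

lemma condTS_eq_Hval_of_nonpos (hε : ε ≤ 0) (hP : InfoStructure P) (hIP : IsIP ε P) (t : T)
    (s : S) : condTS P t s = Hval P t :=
  (condTS_le_Hval t s).antisymm <| sup'_le _ _ fun s' _ =>
    (hIP s' s t).trans (mul_le_of_le_one_left (condTS_nonneg hP t s) (exp_le_one_iff.mpr hε))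

end Privacy

section Optimal

variable {S T : Type} [Fintype S] [Fintype T] {ε : ℝ} {P : S → Bool → T → ℝ}

lemma BlackwellOptimal.false_of_spread (hopt : BlackwellOptimal ε P) {P' : S → Bool → T → ℝ}
    (h0' : ∀ s y t, 0 ≤ P' s y t) (hIP' : IsIP ε P') (hSY : ∀ s y, pSY P' s y = pSY P s y)
    {t₁ t₂ : T} (h12 : t₁ ≠ t₂) (hoff : ∀ t, t ≠ t₁ → t ≠ t₂ → (pYT P' · t) = (pYT P · t))
    (hcons : (pYT P' · t₁) + (pYT P' · t₂) = (pYT P · t₁) + (pYT P · t₂))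
    (h₁ : pYT P' true t₁ * pYT P false t₁ < pYT P true t₁ * pYT P' false t₁)
    (h₂ : pYT P true t₁ * pYT P' false t₂ < pYT P' true t₂ * pYT P false t₁)
    (h₃ : pYT P' true t₁ * pYT P false t₂ ≤ pYT P true t₂ * pYT P' false t₁)
    (h₄ : pYT P true t₂ * pYT P' false t₂ ≤ pYT P' true t₂ * pYT P false t₂) : False := by
  obtain ⟨hdom, hlt⟩ :=
    blackwellDom_and_potential_lt_of_spread h12 (pYT_nonneg h0') hoff hcons h₁ h₂ h₃ h₄
  exact (hopt.potential_le (hopt.1.of_pSY_eq h0' hSY) hIP' hSY hdom).not_gt hlt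

lemma BlackwellOptimal.posterior_lt (hopt : BlackwellOptimal ε P) (hpos : ∀ s t, 0 < pST P s t)
    {t₁ t₂ : T} (hA : {s | postYST P s t₁ = 1} ⊂ {s | postYST P s t₂ = 1}) :
    pYT P true t₁ * pYT P false t₂ < pYT P true t₂ * pYT P false t₁ := by
  obtain ⟨s, hs₂, hs₁⟩ := Set.exists_of_ssubset hA
  have h0 := hopt.1.1
  have h12 : t₁ ≠ t₂ := by rintro rfl; exact hA.ne rfl
  have htrue₂ := pos_true_of_postYST_eq_one (hpos s t₂) hs₂
  have hfalse₁ := pos_false_of_postYST_ne_one h0 (hpos s t₁) hs₁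
  by_contra! hle
  set x := min (P s true t₂) (P s false t₁)
  have hx : 0 < x := lt_min htrue₂ hfalse₁
  set P₁ := transfer P s true t₂ t₁ x
  set P' := transfer P₁ s false t₁ t₂ x
  have h0' : ∀ s y t, 0 ≤ P' s y t :=
    transfer_nonneg (transfer_nonneg h0 h12.symm hx.le (min_le_left _ _)) h12 hx.le
      ((min_le_right _ _).trans_eq (by simp [P₁, transfer]))
  have hSY : ∀ s y, pSY P' s y = pSY P s y := fun s y =>
    (pSY_transfer _ _ _ _ _ _ s y).trans (pSY_transfer _ _ _ _ _ _ s y)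
  have hST : ∀ s t, pST P' s t = pST P s t := fun s t => by
    simp only [P', P₁, pST_transfer, Pi.sub_apply]; split_ifs <;> ring
  have hIP' : IsIP ε P' := fun s₁ s₂ t => by
    simpa only [condTS, hST, pS_eq_of_pSY_eq hSY] using hopt.2.1 s₁ s₂ t
  have hoff : ∀ t, t ≠ t₂ → t ≠ t₁ → (pYT P' · t) = (pYT P · t) := fun t h₂ h₁ =>
    (pYT_transfer_of_ne h₁ h₂).trans (pYT_transfer_of_ne h₂ h₁)
  have hcons : (pYT P' · t₂) + (pYT P' · t₁) = (pYT P · t₂) + (pYT P · t₁) := by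
    rw [add_comm, pYT_transfer_add, add_comm, pYT_transfer_add]
  obtain ⟨e₁, e₂, e₃, e₄⟩ : pYT P' true t₁ = pYT P true t₁ + x ∧
      pYT P' true t₂ = pYT P true t₂ - x ∧ pYT P' false t₁ = pYT P false t₁ - x ∧
      pYT P' false t₂ = pYT P false t₂ + x := by
    simp [P', P₁, pYT_transfer, h12, h12.symm, sub_eq_add_neg]
  have ha₂ : 0 < pYT P true t₂ := htrue₂.trans_le (le_pYT h0 s true t₂)
  have hnn := pYT_nonneg h0
  refine hopt.false_of_spread h0' hIP' hSY h12.symm hoff hcons ?_ ?_ ?_ ?_ <;>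
    simp only [e₁, e₂, e₃, e₄] <;>
    nlinarith [mul_pos hx ha₂, mul_nonneg hx.le (hnn true t₁), mul_nonneg hx.le (hnn false t₁),
      mul_nonneg hx.le (hnn false t₂)]

variable [Nonempty S]

lemma BlackwellOptimal.condTS_eq_Hval_of_true (hopt : BlackwellOptimal ε P) (hε : 0 < ε)
    {t₁ t₂ : T} (hρ : pYT P true t₁ * pYT P false t₂ < pYT P true t₂ * pYT P false t₁)
    (hb₁ : 0 < pYT P false t₁) {s₀ : S} (hmass : 0 < P s₀ true t₁)
    (hmax : condTS P t₁ s₀ = Hval P t₁) : condTS P t₂ s₀ = Hval P t₂ := by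
  have h12 : t₁ ≠ t₂ := by rintro rfl; exact (mul_comm (pYT P true t₁) _ ▸ hρ).false
  by_contra hne
  obtain ⟨x, hx, hxle, hIP'⟩ := exists_isIP_transfer hε hopt.1 hopt.2.1 h12 hmass hmax
    ((condTS_le_Hval t₂ s₀).lt_of_ne hne)
  obtain ⟨e₁, e₂, e₃, e₄⟩ : pYT (transfer P s₀ true t₁ t₂ x) true t₁ = pYT P true t₁ - x ∧
      pYT (transfer P s₀ true t₁ t₂ x) true t₂ = pYT P true t₂ + x ∧
      pYT (transfer P s₀ true t₁ t₂ x) false t₁ = pYT P false t₁ ∧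
      pYT (transfer P s₀ true t₁ t₂ x) false t₂ = pYT P false t₂ := by
    simp [pYT_transfer, h12, h12.symm, sub_eq_add_neg]
  have hnn := pYT_nonneg hopt.1.1
  refine hopt.false_of_spread (transfer_nonneg hopt.1.1 h12 hx.le hxle) hIP'
    (pSY_transfer P s₀ true t₁ t₂ x) h12 (fun t h₁ h₂ => pYT_transfer_of_ne h₁ h₂)
    pYT_transfer_add ?_ ?_ ?_ ?_ <;> simp only [e₁, e₂, e₃, e₄] <;>
    nlinarith [mul_pos hx hb₁, mul_nonneg hx.le (hnn false t₂)]

lemma BlackwellOptimal.condTS_eq_Hval_of_false (hopt : BlackwellOptimal ε P) (hε : 0 < ε)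
    {t₁ t₂ : T} (hρ : pYT P true t₁ * pYT P false t₂ < pYT P true t₂ * pYT P false t₁)
    (ha₁ : 0 < pYT P true t₁) {s₀ : S} (hmass : 0 < P s₀ false t₂)
    (hmax : condTS P t₂ s₀ = Hval P t₂) : condTS P t₁ s₀ = Hval P t₁ := by
  have h12 : t₁ ≠ t₂ := by rintro rfl; exact (mul_comm (pYT P true t₁) _ ▸ hρ).false
  by_contra hne
  obtain ⟨x, hx, hxle, hIP'⟩ := exists_isIP_transfer hε hopt.1 hopt.2.1 h12.symm hmass hmax
    ((condTS_le_Hval t₁ s₀).lt_of_ne hne)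
  obtain ⟨e₁, e₂, e₃, e₄⟩ : pYT (transfer P s₀ false t₂ t₁ x) true t₁ = pYT P true t₁ ∧
      pYT (transfer P s₀ false t₂ t₁ x) true t₂ = pYT P true t₂ ∧
      pYT (transfer P s₀ false t₂ t₁ x) false t₁ = pYT P false t₁ + x ∧
      pYT (transfer P s₀ false t₂ t₁ x) false t₂ = pYT P false t₂ - x := by
    simp [pYT_transfer, h12, h12.symm, sub_eq_add_neg]
  have hnn := pYT_nonneg hopt.1.1
  refine hopt.false_of_spread (transfer_nonneg hopt.1.1 h12.symm hx.le hxle) hIP'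
    (pSY_transfer P s₀ false t₂ t₁ x) h12 (fun t h₁ h₂ => pYT_transfer_of_ne h₂ h₁)
    (by rw [add_comm, pYT_transfer_add, add_comm]) ?_ ?_ ?_ ?_ <;> simp only [e₁, e₂, e₃, e₄] <;>
    nlinarith [mul_pos hx ha₁, mul_nonneg hx.le (hnn true t₂)]

end Optimal

theorem statement10_general {S T : Type} [Fintype S] [Fintype T] [Nonempty S]
    (ε : ℝ) (P : S → Bool → T → ℝ)
    (hopt : BlackwellOptimal ε P)
    (hpos : ∀ s t, 0 < pST P s t)
    (t₁ t₂ : T) (ht₁ : inTildeT P t₁)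
    (hA : {s : S | postYST P s t₁ = 1} ⊂ {s : S | postYST P s t₂ = 1}) :
    {s : S | postYST P s t₁ = 1 ∧ condTS P t₁ s = Hval P t₁} ⊆
      {s : S | postYST P s t₂ = 1 ∧ condTS P t₂ s = Hval P t₂} ∧
    {s : S | postYST P s t₂ ≠ 1 ∧ condTS P t₂ s = Hval P t₂} ⊆
      {s : S | postYST P s t₁ ≠ 1 ∧ condTS P t₁ s = Hval P t₁} := by
  have h0 := hopt.1.1
  rcases le_or_gt ε 0 with hε | hε
  · have hH := condTS_eq_Hval_of_nonpos hε hopt.1 hopt.2.1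
    exact ⟨fun s hs => ⟨hA.subset hs.1, hH t₂ s⟩,
      fun s hs => ⟨fun h => hs.1 (hA.subset h), hH t₁ s⟩⟩
  have hρ := hopt.posterior_lt hpos hA
  refine ⟨fun s ⟨hs, hmax⟩ => ⟨hA.subset hs, ?_⟩,
    fun s ⟨hs, hmax⟩ => ⟨fun h => hs (hA.subset h), ?_⟩⟩
  · exact hopt.condTS_eq_Hval_of_true hε hρ (ht₁.pYT_pos h0 false)
      (pos_true_of_postYST_eq_one (hpos s t₁) hs) hmax
  · exact hopt.condTS_eq_Hval_of_false hε hρ (ht₁.pYT_pos h0 true)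
      (pos_false_of_postYST_ne_one h0 (hpos s t₂) hs) hmax

/-- monotonicity of the regions `B_t` and `C_t` along strict
inclusions of the regions `A_t`. -/
theorem statement10 {S T : Type} [Fintype S] [Fintype T] [Nonempty S]
    (ε : ℝ) (hε : 0 ≤ ε) (P : S → Bool → T → ℝ)
    (hopt : BlackwellOptimal ε P)
    (hpos : ∀ s t, 0 < pST P s t)
    (t₁ t₂ : T) (ht₁ : inTildeT P t₁) (ht₂ : inTildeT P t₂)
    (hA : {s : S | postYST P s t₁ = 1} ⊂ {s : S | postYST P s t₂ = 1}) :
    {s : S | postYST P s t₁ = 1 ∧ condTS P t₁ s = Hval P t₁} ⊆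
      {s : S | postYST P s t₂ = 1 ∧ condTS P t₂ s = Hval P t₂} ∧
    {s : S | postYST P s t₂ ≠ 1 ∧ condTS P t₂ s = Hval P t₂} ⊆
      {s : S | postYST P s t₁ ≠ 1 ∧ condTS P t₁ s = Hval P t₁} :=
  statement10_general ε P hopt hpos t₁ t₂ ht₁ hA

end IPPaper
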